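/- (Rank bound from complementary slackness.) Let σ be a Hermitian matrix with σ − ρ_x positive semidefinite for every x ∈ X and Re Tr(σ) = P_guess (the Lagrange operator), and let (E_x)_{x∈X} be an optimal POVM. Then for every x ∈ X the range of E_x is contained in the kernel of σ − ρ_x; in particular rank(E_x) ≤ n − rank(σ − ρ_x). -/

import Mathlib

open scoped ComplexOrder

/-!
Complementary slackness. Since `∑ₓ Eₓ = 1`, the slacks `Tr((σ - ρₓ) Eₓ)` add up to
`Tr σ - p(E)`, whose real part is `P_guess - P_guess = 0`. Each slack is the trace of a product of
two positive semidefinite matrices, hence a nonnegative real number, so each one vanishes. For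
positive semidefinite `A`, `B`, writing `C = √A √B` gives `Tr(A B) = Tr(Cᴴ C)`, so `Tr(A B) = 0`
forces `C = 0` and then `A B = √A C √B = 0`. Thus `(σ - ρₓ) Eₓ = 0`, which is the range inclusion,
and Sylvester's inequality gives the rank bound.
-/

lemma Complex.eq_zero_of_nonneg_of_re_eq_zero {z : ℂ} (hz : 0 ≤ z) (hre : z.re = 0) : z = 0 :=
  Complex.ext hre (Complex.nonneg_iff.1 hz).2.symm

namespace Matrix

lemma sum_trace_sub_mul_eq {X m R : Type*} [Fintype X] [Fintype m] [DecidableEq m]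
    [CommRing R] {σ : Matrix m m R} {ρ E : X → Matrix m m R} (hE : ∑ x, E x = 1) :
    ∑ x, ((σ - ρ x) * E x).trace = σ.trace - ∑ x, (E x * ρ x).trace := by
  simp only [sub_mul, trace_sub, Finset.sum_sub_distrib, ← trace_sum, ← Finset.mul_sum, hE,
    mul_one, trace_mul_comm (ρ _)]

section PosSemidef

open scoped MatrixOrder

variable {ι 𝕜 : Type*} [Fintype ι] [DecidableEq ι] [RCLike 𝕜] {A B : Matrix ι ι 𝕜}

lemma PosSemidef.trace_mul_eq_trace_conjTranspose_mul_self
    (hA : A.PosSemidef) (hB : B.PosSemidef) :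
    (A * B).trace = ((CFC.sqrt A * CFC.sqrt B)ᴴ * (CFC.sqrt A * CFC.sqrt B)).trace := by
  rw [conjTranspose_mul, (nonneg_iff_posSemidef.1 (CFC.sqrt_nonneg A)).isHermitian.eq,
    (nonneg_iff_posSemidef.1 (CFC.sqrt_nonneg B)).isHermitian.eq,
    ← mul_assoc, mul_assoc (CFC.sqrt B), CFC.sqrt_mul_sqrt_self A hA.nonneg, trace_mul_cycle,
    CFC.sqrt_mul_sqrt_self B hB.nonneg, trace_mul_comm]

lemma PosSemidef.trace_mul_nonneg (hA : A.PosSemidef) (hB : B.PosSemidef) :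
    0 ≤ (A * B).trace := by
  rw [hA.trace_mul_eq_trace_conjTranspose_mul_self hB]
  exact (posSemidef_conjTranspose_mul_self _).trace_nonneg

lemma PosSemidef.trace_mul_eq_zero_iff (hA : A.PosSemidef) (hB : B.PosSemidef) :
    (A * B).trace = 0 ↔ A * B = 0 := by
  refine ⟨fun h => ?_, fun h => by rw [h, trace_zero]⟩
  rw [hA.trace_mul_eq_trace_conjTranspose_mul_self hB,
    trace_conjTranspose_mul_self_eq_zero_iff] at h
  calc A * B = CFC.sqrt A * (CFC.sqrt A * CFC.sqrt B) * CFC.sqrt B := by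
        rw [← mul_assoc, CFC.sqrt_mul_sqrt_self A hA.nonneg, mul_assoc,
          CFC.sqrt_mul_sqrt_self B hB.nonneg]
    _ = 0 := by rw [h, mul_zero, zero_mul]

end PosSemidef

end Matrix

theorem qsd_rank_bound_general {n : ℕ} {X : Type*} [Fintype X]
    (ρ : X → Matrix (Fin n) (Fin n) ℂ)
    (σ : Matrix (Fin n) (Fin n) ℂ)
    (hfeas : ∀ x, (σ - ρ x).PosSemidef)
    (hσtr : (σ.trace).re =
      sSup {p : ℝ | ∃ G : X → Matrix (Fin n) (Fin n) ℂ,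
        (∀ x, (G x).PosSemidef) ∧ (∑ x, G x) = 1 ∧
        p = ∑ x, ((G x * ρ x).trace).re})
    (E : X → Matrix (Fin n) (Fin n) ℂ)
    (hE : ∀ x, (E x).PosSemidef) (hEsum : (∑ x, E x) = 1)
    (hEopt : (∑ x, ((E x * ρ x).trace).re) =
      sSup {p : ℝ | ∃ G : X → Matrix (Fin n) (Fin n) ℂ,
        (∀ x, (G x).PosSemidef) ∧ (∑ x, G x) = 1 ∧
        p = ∑ x, ((G x * ρ x).trace).re}) :
    ∀ x, LinearMap.range (E x).mulVecLin ≤ LinearMap.ker (σ - ρ x).mulVecLin ∧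
      (E x).rank ≤ n - (σ - ρ x).rank := by
  have hslack : ∀ x, 0 ≤ ((σ - ρ x) * E x).trace := fun x => (hfeas x).trace_mul_nonneg (hE x)
  have htotal : ∑ x, ((σ - ρ x) * E x).trace = 0 := by
    refine Complex.eq_zero_of_nonneg_of_re_eq_zero (Finset.sum_nonneg fun x _ => hslack x) ?_
    rw [Matrix.sum_trace_sub_mul_eq hEsum, Complex.sub_re, Complex.re_sum]
    exact sub_eq_zero.2 (hσtr.trans hEopt.symm)
  intro x
  have hzero : (σ - ρ x) * E x = 0 := ((hfeas x).trace_mul_eq_zero_iff (hE x)).1 <|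
    (Finset.sum_eq_zero_iff_of_nonneg fun y _ => hslack y).1 htotal x (Finset.mem_univ x)
  refine ⟨LinearMap.range_le_ker_iff.2 ?_, ?_⟩
  · rw [← Matrix.mulVecLin_mul, hzero, Matrix.mulVecLin_zero]
  · have := Matrix.rank_add_rank_le_card_of_mul_eq_zero hzero
    rw [Fintype.card_fin] at this
    omega

/-- Rank bound from complementary slackness: if `σ` is the Lagrange operator and `E` an
optimal POVM, then for every `x` the range of `E x` is contained in the kernel of
`σ - ρ x`; in particular `rank (E x) ≤ n - rank (σ - ρ x)`. -/
theorem qsd_rank_bound {n : ℕ} {X : Type*} [Fintype X] [Nonempty X]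
    (ρ : X → Matrix (Fin n) (Fin n) ℂ)
    (hρ : ∀ x, (ρ x).PosSemidef)
    (hρtr : (∑ x, (ρ x).trace) = 1)
    (σ : Matrix (Fin n) (Fin n) ℂ)
    (hσ : σ.IsHermitian)
    (hfeas : ∀ x, (σ - ρ x).PosSemidef)
    (hσtr : (σ.trace).re =
      sSup {p : ℝ | ∃ G : X → Matrix (Fin n) (Fin n) ℂ,
        (∀ x, (G x).PosSemidef) ∧ (∑ x, G x) = 1 ∧
        p = ∑ x, ((G x * ρ x).trace).re})
    (E : X → Matrix (Fin n) (Fin n) ℂ)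
    (hE : ∀ x, (E x).PosSemidef) (hEsum : (∑ x, E x) = 1)
    (hEopt : (∑ x, ((E x * ρ x).trace).re) =
      sSup {p : ℝ | ∃ G : X → Matrix (Fin n) (Fin n) ℂ,
        (∀ x, (G x).PosSemidef) ∧ (∑ x, G x) = 1 ∧
        p = ∑ x, ((G x * ρ x).trace).re}) :
    ∀ x, LinearMap.range (E x).mulVecLin ≤ LinearMap.ker (σ - ρ x).mulVecLin ∧
      (E x).rank ≤ n - (σ - ρ x).rank :=
  qsd_rank_bound_general ρ σ hfeas hσtr E hE hEsum hEopt
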